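/- For a symmetric algebra A, the A-bimodule isomorphism Z : A → A* given by Z(a) = ⟨a,−⟩ intertwines Tradler's BV operator Δ on HH^•(A) with the operator B̄ on H^•(A,A*): B̄ ∘ Z_* = Z_* ∘ Δ, where Z_* is post-composition with Z on cochains. -/

import Mathlib

section Cochains

variable {k : Type} [CommRing k] {A : Type} [Ring A] [Algebra k A]
variable {W : Type} [AddCommGroup W] [Module k W]

/-- The tuple obtained from `a : Fin (n+1) → A` by multiplying entries `i` and `i+1`. -/
def mergeT {n : ℕ} (a : Fin (n+1) → A) (i : Fin n) : Fin n → A := fun j =>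
  if (j : ℕ) < (i : ℕ) then a (Fin.castSucc j)
  else if (j : ℕ) = (i : ℕ) then a (Fin.castSucc j) * a (Fin.succ j)
  else a (Fin.succ j)

/-- The standard Hochschild coboundary formula for a cochain with values in a
bimodule `W` whose left and right `A`-actions are `la` and `ra`. -/
def hdG (la : A → W → W) (ra : A → W → W) {n : ℕ}
    (f : (Fin n → A) → W) (a : Fin (n+1) → A) : W :=
  la (a 0) (f (Fin.tail a))
    + (∑ i : Fin n, ((-1 : ℤ)^((i : ℕ)+1)) • f (mergeT a i))
    + ((-1 : ℤ)^(n+1)) • ra (a (Fin.last n)) (f (Fin.init a))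

/-- The left action of `A` on `A* = Hom_k(A,k)`: `(a·f)(x) = f(xa)`. -/
noncomputable def laD (a : A) (f : Module.Dual k A) : Module.Dual k A :=
  f ∘ₗ LinearMap.mulRight k a

/-- The right action of `A` on `A* = Hom_k(A,k)`: `(f·b)(x) = f(bx)`. -/
noncomputable def raD (b : A) (f : Module.Dual k A) : Module.Dual k A :=
  f ∘ₗ LinearMap.mulLeft k b

/-- The Hochschild coboundary on cochains with values in `A*`, with the canonical
bimodule structure `(afb)(x) = f(bxa)`. -/
noncomputable def hdD {n : ℕ} (f : (Fin n → A) → Module.Dual k A)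
    (a : Fin (n+1) → A) : Module.Dual k A :=
  hdG laD raD f a

/-- Being a Hochschild coboundary, for cochains with values in a bimodule `W`
with actions `la`, `ra` (in degree `0` this means being zero). -/
def IsCoboundG (la : A → W → W) (ra : A → W → W) :
    (n : ℕ) → ((Fin n → A) → W) → Prop
  | 0, F => ∀ a, F a = 0
  | m+1, F => ∃ g : MultilinearMap k (fun _ : Fin m => A) W,
      ∀ a, F a = hdG la ra (⇑g) a

/-- Being a Hochschild coboundary for `A*`-valued cochains. -/
noncomputable def IsCoboundD : (n : ℕ) → ((Fin n → A) → Module.Dual k A) → Prop :=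
  IsCoboundG (k := k) (A := A) (laD (k := k) (A := A)) (raD (k := k) (A := A))

/-- The tuple `(a_i, …, aₙ, a₀, …, a_{i-1})` built from `a₀`-placeholder and `a`,
with the placeholder slot left as `1`. -/
noncomputable def cycTuple {n : ℕ} (a : Fin n → A) (i : Fin (n+1)) : Fin (n+1) → A :=
  fun j => if h : j + i = 0 then 1 else a ((j + i).pred h)

/-- The operator `B̄ : Hom(A^{⊗(n+1)}, A*) → Hom(A^{⊗ n}, A*)`,
`B̄(f)(a₁ ⊗ ⋯ ⊗ aₙ)(a₀) = ∑ (−1)^{ni} f(a_i ⊗ ⋯ ⊗ aₙ ⊗ a₀ ⊗ ⋯ ⊗ a_{i-1})(1)`. -/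
noncomputable def Bbar {n : ℕ}
    (f : MultilinearMap k (fun _ : Fin (n+1) => A) (Module.Dual k A))
    (a : Fin n → A) : Module.Dual k A :=
  ∑ i : Fin (n+1), ((-1 : ℤ)^(n * (i : ℕ))) •
    ((Module.Dual.eval k A (1 : A)) ∘ₗ (f.toLinearMap (cycTuple a i) (-i)))

end Cochains

/-!
Evaluate the defining identity of `Δf` at `(a₁, …, aₙ, a₀)`. After shifting the summation index
by one, its `i`-th term is the `(i+1)`-st term of `B̄(Z ∘ f)(a₁, …, aₙ)(a₀)`: filling the
placeholder slot of the `(i+1)`-st cyclic tuple with `a₀` gives the `i`-th rotation of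
`(a₁, …, aₙ, a₀)`, and the signs agree since `n (n+1)` is even.
-/

lemma update_cycTuple_add_one {A : Type} [Ring A] {n : ℕ} (a : Fin n → A) (b : A)
    (i : Fin (n+1)) :
    Function.update (cycTuple a (i+1)) (-(i+1)) b =
      fun j => (Fin.snoc a b : Fin (n+1) → A) (j + i) := by
  funext j
  rcases Fin.eq_castSucc_or_eq_last (j + i) with ⟨m, hm⟩ | hlast
  · have hsucc : j + (i + 1) = m.succ := by rw [← add_assoc, hm, Fin.coeSucc_eq_succ]
    have hj : j ≠ -(i + 1) := by
      rintro rfl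
      exact Fin.succ_ne_zero m (hsucc ▸ neg_add_cancel (i + 1))
    rw [Function.update_of_ne hj, hm, Fin.snoc_castSucc, cycTuple,
      dif_neg (hsucc ▸ Fin.succ_ne_zero m)]
    simp only [hsucc, Fin.pred_succ]
  · have hj : j = -(i + 1) :=
      eq_neg_of_add_eq_zero_left (by rw [← add_assoc, hlast, Fin.last_add_one])
    rw [hj, Function.update_self, ← hj, hlast, Fin.snoc_last]

lemma neg_one_pow_succ_mul_eq_pow_mul_val_add_one {n : ℕ} (i : Fin (n+1)) :
    (-1 : ℤ) ^ (((i : ℕ) + 1) * n) = (-1) ^ (n * ((i + 1 : Fin (n+1)) : ℕ)) := by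
  rw [Fin.val_add_one]
  split_ifs with hi
  · rw [hi, Fin.val_last, mul_zero, pow_zero, mul_comm]
    exact (Nat.even_mul_succ_self n).neg_one_pow
  · rw [mul_comm]

theorem statement8_general (k : Type) [Field k] (A : Type) [Ring A] [Algebra k A]
    (Z : A →ₗ[k] Module.Dual k A)
    (n : ℕ) (f : MultilinearMap k (fun _ : Fin (n+1) => A) A)
    (Δf : MultilinearMap k (fun _ : Fin n => A) A)
    -- the defining property of Tradler's operator `Δ`:
    (hΔ : ∀ a : Fin (n+1) → A,
      Z (Δf (Fin.init a)) (a (Fin.last n)) =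
        ∑ i : Fin (n+1), ((-1 : ℤ)^(((i : ℕ)+1) * n)) • Z (f fun j => a (j + i)) 1) :
    ∀ a : Fin n → A, Bbar (Z.compMultilinearMap f) a = Z (Δf a) := by
  intro a
  ext b
  have hΔb := hΔ (Fin.snoc a b)
  rw [Fin.init_snoc, Fin.snoc_last] at hΔb
  rw [Bbar, LinearMap.sum_apply, hΔb]
  refine (Fintype.sum_equiv (Equiv.addRight 1) _ _ fun i => ?_).symm
  simp only [Equiv.coe_addRight, LinearMap.smul_apply, LinearMap.coe_comp, Function.comp_apply,
    MultilinearMap.toLinearMap_apply, Module.Dual.eval_apply, LinearMap.compMultilinearMap_apply]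
  rw [neg_one_pow_succ_mul_eq_pow_mul_val_add_one, update_cycTuple_add_one]

/-- For a symmetric algebra `A` with form `⟨−,−⟩` (encoded as
`Z : A →ₗ A*`, `Z a = ⟨a,−⟩`), the `A`-bimodule isomorphism `Z` intertwines Tradler's
BV operator `Δ` on `HH^•(A)` with the operator `B̄` on `H^•(A,A*)`:
`B̄ ∘ Z_* = Z_* ∘ Δ` where `Z_*` is post-composition with `Z` on cochains. -/
theorem statement8 (k : Type) [Field k] (A : Type) [Ring A] [Algebra k A]
    [FiniteDimensional k A]
    (Z : A →ₗ[k] Module.Dual k A)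
    (hsymm : ∀ a b, Z a b = Z b a)
    (hfrob : ∀ a b c, Z (a * b) c = Z a (b * c))
    (hnd : ∀ a, (∀ b, Z a b = 0) → a = 0)
    (n : ℕ) (f : MultilinearMap k (fun _ : Fin (n+1) => A) A)
    (Δf : MultilinearMap k (fun _ : Fin n => A) A)
    -- the defining property of Tradler's operator `Δ`:
    (hΔ : ∀ a : Fin (n+1) → A,
      Z (Δf (Fin.init a)) (a (Fin.last n)) =
        ∑ i : Fin (n+1), ((-1 : ℤ)^(((i : ℕ)+1) * n)) • Z (f fun j => a (j + i)) 1) :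
    ∀ a : Fin n → A, Bbar (Z.compMultilinearMap f) a = Z (Δf a) :=
  statement8_general k A Z n f Δf hΔ
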